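/- arXiv:1411.1088 — 2 statements merged into one kernel-verified Lean document; each statement's English description precedes it below -/
import Mathlib

section
/- Let L be a real symmetric positive semi-definite N×N matrix and K = L(L+I)⁻¹. For every Y ⊆ {1,…,N}, det(L_Y)/det(L+I) = |det(K − I_{Ȳ})|, where I_{Ȳ} is the N×N diagonal matrix with (i,i)-entry equal to 0 for i ∈ Y and 1 for i ∉ Y. -/
open Matrix BigOperators

/-- Principal submatrix determinant: `det([L_{ij}]_{i,j ∈ Y})`, with `det(L_∅) = 1`. -/
noncomputable def pdet {N : ℕ} (L : Matrix (Fin N) (Fin N) ℝ) (Y : Finset (Fin N)) : ℝ :=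
  (L.submatrix (fun i : Y => (i : Fin N)) (fun j : Y => (j : Fin N))).det

lemma pdet_nonneg {N : ℕ} {L : Matrix (Fin N) (Fin N) ℝ} (hL : L.PosSemidef)
    (Y : Finset (Fin N)) : 0 ≤ pdet L Y := by
  classical
  have h : (L.submatrix (fun i : Y => (i : Fin N)) (fun j : Y => (j : Fin N))).PosSemidef :=
    hL.submatrix _
  rw [pdet, h.isHermitian.det_eq_prod_eigenvalues]
  exact Finset.prod_nonneg fun i _ => h.eigenvalues_nonneg i

/-- The `K`-based formula for the probability of a set under a DPP:
`det(L_Y)/det(L+I) = |det(K − I_{Ȳ})|`, where `K = L(L+I)⁻¹` and `I_{Ȳ}` is the identity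
with entry `(i,i)` zeroed for `i ∈ Y`. -/
theorem dpp_prob_via_marginal_kernel (N : ℕ) (L : Matrix (Fin N) (Fin N) ℝ)
    (hL : L.PosSemidef) (Y : Finset (Fin N)) :
    pdet L Y / (L + 1).det
      = |(L * (L + 1)⁻¹ -
          Matrix.diagonal (fun i => if i ∈ Y then (0 : ℝ) else 1)).det| := by
  classical
  set D : Matrix (Fin N) (Fin N) ℝ := Matrix.diagonal (fun i => if i ∈ Y then (0 : ℝ) else 1)
    with hDdef
  have hpd : (L + 1).PosDef := Matrix.PosDef.posSemidef_add hL Matrix.PosDef.one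
  have hdetpos : 0 < (L + 1).det := hpd.det_pos
  have hmul : (L * (L + 1)⁻¹ - D) * (L + 1) = L - D * (L + 1) := by
    rw [sub_mul, mul_assoc, Matrix.nonsing_inv_mul _ hdetpos.ne'.isUnit, mul_one]
  -- reindex to block form
  let e : {x // x ∈ Y} ⊕ {x // x ∉ Y} ≃ Fin N := Equiv.sumCompl (· ∈ Y)
  have hblock : (L - D * (L + 1)).submatrix e e =
      Matrix.fromBlocks
        (L.submatrix (fun i : Y => (i : Fin N)) (fun j : Y => (j : Fin N)))
        (L.submatrix (fun i : Y => (i : Fin N)) (fun j : {x // x ∉ Y} => (j : Fin N)))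
        0 (-1) := by
    ext i j
    cases i with
    | inl a =>
      cases j with
      | inl b =>
        simp [e, hDdef, Matrix.diagonal_mul, a.2]
      | inr b =>
        simp [e, hDdef, Matrix.diagonal_mul, a.2]
    | inr a =>
      cases j with
      | inl b =>
        have hne : (a : Fin N) ≠ (b : Fin N) := by
          intro h
          exact a.2 (h ▸ b.2)
        simp [e, hDdef, Matrix.diagonal_mul, a.2, Matrix.one_apply_ne hne]
      | inr b =>
        have : ((a : Fin N) = (b : Fin N)) ↔ a = b := by
          constructor
          · intro h
            exact Subtype.ext h
          · intro h; rw [h]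
        simp [e, hDdef, Matrix.diagonal_mul, a.2, Matrix.one_apply, this, Matrix.add_apply]
  have hdetM : (L - D * (L + 1)).det =
      pdet L Y * (-1 : Matrix {x // x ∉ Y} {x // x ∉ Y} ℝ).det := by
    rw [← Matrix.det_submatrix_equiv_self e, hblock, Matrix.det_fromBlocks_zero₂₁, pdet]
  have hdetneg : |(-1 : Matrix {x // x ∉ Y} {x // x ∉ Y} ℝ).det| = 1 := by
    rw [Matrix.det_neg, Matrix.det_one, mul_one, abs_pow, abs_neg, abs_one, one_pow]
  have key : (L * (L + 1)⁻¹ - D).det * (L + 1).det = (L - D * (L + 1)).det := by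
    rw [← Matrix.det_mul, hmul]
  have : |(L * (L + 1)⁻¹ - D).det| * (L + 1).det = pdet L Y := by
    have := congrArg abs key
    rw [abs_mul, abs_of_pos hdetpos, hdetM, abs_mul, hdetneg, mul_one,
      abs_of_nonneg (pdet_nonneg hL Y)] at this
    exact this
  rw [← this]
  field_simp
end

section
/- Let L be a real symmetric positive semi-definite N×N matrix and K = L(L+I)⁻¹. For every A ⊆ {1,…,N}, ∑_{Y : A ⊆ Y ⊆ {1,…,N}} det(L_Y) / det(L+I) = det(K_A). That is, the probability under the DPP with kernel L that a random subset contains A equals det(K_A). -/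
open Matrix BigOperators

lemma det_eq_pdet {N : ℕ} (S : Finset (Fin N)) (M : Matrix (Fin N) (Fin N) ℝ)
    (h : ∀ i ∉ S, M i = Pi.single i 1) : M.det = pdet M S := by
  classical
  let e : {x // x ∈ S} ⊕ {x // x ∉ S} ≃ Fin N := Equiv.sumCompl (· ∈ S)
  rw [(Matrix.det_submatrix_equiv_self e M).symm]
  have hM : M.submatrix e e =
      Matrix.fromBlocks
        (M.submatrix (fun i : {x // x ∈ S} => (i : Fin N)) (fun j : {x // x ∈ S} => (j : Fin N)))
        (M.submatrix (fun i : {x // x ∈ S} => (i : Fin N)) (fun j : {x // x ∉ S} => (j : Fin N)))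
        0 1 := by
    ext i j
    cases i with
    | inl i =>
      cases j with
      | inl j => rfl
      | inr j => rfl
    | inr i =>
      cases j with
      | inl j =>
        show M (i : Fin N) (j : Fin N) = 0
        rw [h i i.2, Pi.single_apply, if_neg]
        intro hij
        exact i.2 (hij ▸ j.2)
      | inr j =>
        show M (i : Fin N) (j : Fin N) = (1 : Matrix {x // x ∉ S} {x // x ∉ S} ℝ) i j
        rw [h i i.2, Pi.single_apply, Matrix.one_apply]
        simp [Subtype.ext_iff, eq_comm]
  rw [hM, Matrix.det_fromBlocks_zero₂₁, Matrix.det_one, mul_one]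
  rfl

lemma sum_pdet_eq_det_add {N : ℕ} (L : Matrix (Fin N) (Fin N) ℝ) (A : Finset (Fin N)) :
    ∑ Y ∈ (Finset.univ : Finset (Finset (Fin N))).filter (fun Y => A ⊆ Y), pdet L Y
      = (L + Matrix.diagonal (fun i => if i ∈ A then (0:ℝ) else 1)).det := by
  classical
  set D : Matrix (Fin N) (Fin N) ℝ := Matrix.diagonal (fun i => if i ∈ A then (0:ℝ) else 1) with hD
  have hdet : (L + D).det = (Matrix.detRowAlternating : AlternatingMap ℝ (Fin N → ℝ) ℝ (Fin N))
      ((fun i => L i) + (fun i => D i)) := rfl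
  have hsum : (Matrix.detRowAlternating : AlternatingMap ℝ (Fin N → ℝ) ℝ (Fin N))
      ((fun i => L i) + (fun i => D i))
      = ∑ s : Finset (Fin N), (Matrix.detRowAlternating : AlternatingMap ℝ (Fin N → ℝ) ℝ (Fin N))
          (s.piecewise (fun i => L i) (fun i => D i)) :=
    (Matrix.detRowAlternating : AlternatingMap ℝ (Fin N → ℝ) ℝ (Fin N)).toMultilinearMap.map_add_univ _ _
  rw [hdet, hsum, Finset.sum_filter]
  apply Finset.sum_congr rfl
  intro S _
  by_cases hAS : A ⊆ S
  · rw [if_pos hAS]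
    have key : (Matrix.detRowAlternating : AlternatingMap ℝ (Fin N → ℝ) ℝ (Fin N))
        (S.piecewise (fun i => L i) (fun i => D i))
        = (Matrix.of (S.piecewise (fun i => L i) (fun i => D i))).det := rfl
    rw [key, det_eq_pdet S]
    · unfold pdet
      congr 1
      ext i j
      simp [Finset.piecewise_eq_of_mem _ _ _ i.2]
    · intro i hi
      show S.piecewise (fun i => L i) (fun i => D i) i = Pi.single i 1
      rw [Finset.piecewise_eq_of_notMem _ _ _ hi]
      ext j
      by_cases hij : j = i
      · subst hij
        have hjA : j ∉ A := fun h => hi (hAS h)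
        simp [hD, Matrix.diagonal_apply_eq, hjA]
      · simp [hD, Matrix.diagonal_apply_ne' _ hij, Pi.single_apply, hij]
  · rw [if_neg hAS]
    obtain ⟨a, haA, haS⟩ := Finset.not_subset.mp hAS
    have key : (Matrix.detRowAlternating : AlternatingMap ℝ (Fin N → ℝ) ℝ (Fin N))
        (S.piecewise (fun i => L i) (fun i => D i))
        = (Matrix.of (S.piecewise (fun i => L i) (fun i => D i))).det := rfl
    rw [key, eq_comm]
    apply Matrix.det_eq_zero_of_row_eq_zero a
    intro j
    show S.piecewise (fun i => L i) (fun i => D i) a j = 0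
    rw [Finset.piecewise_eq_of_notMem _ _ _ haS]
    by_cases hij : j = a
    · subst hij; simp [hD, haA]
    · simp [hD, Matrix.diagonal_apply_ne' _ hij]

/-- `K = L(L+I)⁻¹` is the marginal kernel of the DPP with kernel `L`:
the probability that a sample contains `A` is `det(K_A)`. -/
theorem dpp_marginals (N : ℕ) (L : Matrix (Fin N) (Fin N) ℝ) (hL : L.PosSemidef)
    (A : Finset (Fin N)) :
    ∑ Y ∈ (Finset.univ : Finset (Finset (Fin N))).filter (fun Y => A ⊆ Y),
        pdet L Y / (L + 1).det
      = pdet (L * (L + 1)⁻¹) A := by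
  classical
  have hposdef : (L + 1).PosDef := Matrix.PosDef.posSemidef_add hL Matrix.PosDef.one
  have hdetne : (L + 1).det ≠ 0 := ne_of_gt hposdef.det_pos
  have hinv : (L + 1) * (L + 1)⁻¹ = 1 :=
    Matrix.mul_nonsing_inv _ (isUnit_iff_ne_zero.mpr hdetne)
  have hK : L * (L + 1)⁻¹ = 1 - (L + 1)⁻¹ := by
    have h1 : (L + 1) * (L + 1)⁻¹ = L * (L + 1)⁻¹ + (L + 1)⁻¹ := by
      rw [Matrix.add_mul, Matrix.one_mul]
    rw [h1] at hinv
    linear_combination (norm := abel) hinv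
  set M := (L + 1)⁻¹ with hM
  set E : Matrix (Fin N) (Fin N) ℝ := Matrix.diagonal (fun i => if i ∈ A then (1:ℝ) else 0) with hE
  set D : Matrix (Fin N) (Fin N) ℝ := Matrix.diagonal (fun i => if i ∈ A then (0:ℝ) else 1) with hD
  set C : Matrix (Fin N) A ℝ := Matrix.of (fun (i : Fin N) (a : A) => M i a) with hC
  set R : Matrix A (Fin N) ℝ := Matrix.of (fun (a : A) (j : Fin N) => if (a : Fin N) = j then (1:ℝ) else 0) with hR
  have hME : M * E = C * R := by
    ext i j
    have h1 : (M * E) i j = M i j * (if j ∈ A then (1:ℝ) else 0) := Matrix.mul_diagonal _ _ _ _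
    have h2 : (C * R) i j = ∑ a : A, M i a * (if (a : Fin N) = j then (1:ℝ) else 0) :=
      Matrix.mul_apply
    rw [h1, h2]
    by_cases hj : j ∈ A
    · rw [Finset.sum_eq_single_of_mem (⟨j, hj⟩ : A) (Finset.mem_univ _)]
      · simp [hj]
      · intro b _ hb
        simp only [mul_ite, mul_one, mul_zero, ite_eq_right_iff]
        intro hbj
        exact absurd (Subtype.ext hbj) hb
    · rw [if_neg hj, mul_zero, eq_comm, Finset.sum_eq_zero]
      intro b _
      have : (b : Fin N) ≠ j := fun h => hj (h ▸ b.2)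
      simp [this]
  have hRC : R * C = Matrix.of (fun (a b : A) => M a b) := by
    ext a b
    have h2 : (R * C) a b = ∑ j : Fin N, (if (a : Fin N) = j then (1:ℝ) else 0) * M j b :=
      Matrix.mul_apply
    rw [h2, Finset.sum_eq_single_of_mem (a : Fin N) (Finset.mem_univ _)]
    · simp
    · intro j _ hj; simp [Ne.symm hj]
  have hwa : (1 - M * E).det = (Matrix.of (fun (a b : A) =>
      (1 - M) (a : Fin N) (b : Fin N))).det := by
    rw [hME, Matrix.det_one_sub_mul_comm, hRC]
    congr 1
    ext a b
    simp only [Matrix.sub_apply, Matrix.of_apply, Matrix.one_apply]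
    by_cases hab : a = b
    · subst hab; simp
    · have : (a : Fin N) ≠ (b : Fin N) := fun h => hab (Subtype.ext h)
      simp [hab, this]
  have hfact : L + D = (L + 1) * (1 - M * E) := by
    rw [Matrix.mul_sub, Matrix.mul_one, ← Matrix.mul_assoc, hinv, Matrix.one_mul]
    have hDE : D = 1 - E := by
      rw [hD, hE]
      ext i j
      by_cases hij : i = j
      · subst hij; by_cases h : i ∈ A <;>
          simp [Matrix.diagonal_apply_eq, h, Matrix.one_apply, Matrix.sub_apply]
      · simp [Matrix.diagonal_apply_ne _ hij, Matrix.one_apply_ne hij, Matrix.sub_apply]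
    rw [hDE]; abel
  have hsum := sum_pdet_eq_det_add L A
  calc ∑ Y ∈ (Finset.univ : Finset (Finset (Fin N))).filter (fun Y => A ⊆ Y),
        pdet L Y / (L + 1).det
      = (∑ Y ∈ (Finset.univ : Finset (Finset (Fin N))).filter (fun Y => A ⊆ Y),
          pdet L Y) / (L + 1).det := by rw [Finset.sum_div]
    _ = (L + D).det / (L + 1).det := by rw [hsum]
    _ = (1 - M * E).det := by
        rw [hfact, Matrix.det_mul, mul_comm, mul_div_assoc, div_self hdetne, mul_one]
    _ = pdet (L * (L + 1)⁻¹) A := by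
        rw [hwa, hK]
        rfl
end
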